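/- For every n ≥ 3, the cycle C_n on n vertices satisfies th_⌊Z⌋(C_n) = ⌈2√n − 1⌉. -/

import Mathlib

open SimpleGraph

namespace ZFT

variable {V : Type*} {α : Type*} {β : Type*}

/-! ### Standard zero forcing (simultaneous propagation) -/

/-- One round of simultaneous standard zero forcing: a blue vertex forces its
unique white neighbor. -/
def zStep (G : SimpleGraph V) (S : Set V) : Set V :=
  S ∪ {w | ∃ u ∈ S, G.Adj u w ∧ ∀ x, G.Adj u x → x ∉ S → x = w}

/-- `B` is a standard zero forcing set of `G`. -/
def IsZeroForcingSet (G : SimpleGraph V) (B : Set V) : Prop :=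
  ∃ t : ℕ, (zStep G)^[t] B = Set.univ

/-- The standard propagation time `pt_Z(G;B)` (`⊤` if `B` is not a zero forcing set). -/
noncomputable def ptZ (G : SimpleGraph V) (B : Set V) : ℕ∞ :=
  sInf {n : ℕ∞ | ∃ t : ℕ, n = t ∧ (zStep G)^[t] B = Set.univ}

/-- The standard throttling number `th_Z(G;B) = |B| + pt_Z(G;B)`. -/
noncomputable def thZ (G : SimpleGraph V) (B : Set V) : ℕ∞ :=
  (B.ncard : ℕ∞) + ptZ G B

/-- The standard throttling number `th_Z(G)`. -/
noncomputable def thZgraph (G : SimpleGraph V) : ℕ∞ :=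
  sInf {n : ℕ∞ | ∃ B : Set V, IsZeroForcingSet G B ∧ n = thZ G B}

/-- The standard zero forcing number `Z(G)`. -/
noncomputable def Znum (G : SimpleGraph V) : ℕ :=
  sInf {k : ℕ | ∃ B : Set V, IsZeroForcingSet G B ∧ B.ncard = k}

/-- The standard propagation time `pt_Z(G)`, minimized over minimum zero forcing sets. -/
noncomputable def ptZgraph (G : SimpleGraph V) : ℕ∞ :=
  sInf {n : ℕ∞ | ∃ B : Set V, IsZeroForcingSet G B ∧ B.ncard = Znum G ∧ n = ptZ G B}

/-! ### Sets of standard forces -/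

/-- Validity of a single standard force `u → w` when `blue` is the blue set. -/
def zForceValid (G : SimpleGraph V) (blue : Set V) (u w : V) : Prop :=
  u ∈ blue ∧ w ∉ blue ∧ G.Adj u w ∧ ∀ x, G.Adj u x → x ∉ blue → x = w

/-- Validity of a chronological list of standard forces starting from a blue set. -/
def zValidList (G : SimpleGraph V) : Set V → List (V × V) → Prop
  | _, [] => True
  | blue, p :: L => zForceValid G blue p.1 p.2 ∧ zValidList G (insert p.2 blue) L

/-- The blue set after performing all forces in a list, starting from `B`. -/
def endBlue (B : Set V) (L : List (V × V)) : Set V :=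
  B ∪ {w | ∃ u, (u, w) ∈ L}

/-- The set of vertices that have performed a force in a list. -/
def endForced (L : List (V × V)) : Set V := {u | ∃ w, (u, w) ∈ L}

/-- `F` is a set of standard forces of `B` in `G` (recorded from a maximal
chronological list of forces). -/
def IsZForceSet (G : SimpleGraph V) (B : Set V) (F : Set (V × V)) : Prop :=
  ∃ L : List (V × V), zValidList G B L ∧
    (∀ u w, ¬ zForceValid G (endBlue B L) u w) ∧ F = {p | p ∈ L}

/-- The set of blue vertices at time `t` when the forces of `F` are performed at the
earliest possible time steps, starting from `B` blue. -/
def zBlueAt (G : SimpleGraph V) (F : Set (V × V)) (B : Set V) : ℕ → Set V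
  | 0 => B
  | t + 1 =>
      zBlueAt G F B t ∪ {w | ∃ v, (v, w) ∈ F ∧ zForceValid G (zBlueAt G F B t) v w}

/-- The standard propagation time `pt_Z(G;F)` of a set of forces `F` of `B`. -/
noncomputable def ptZofF (G : SimpleGraph V) (F : Set (V × V)) (B : Set V) : ℕ∞ :=
  sInf {n : ℕ∞ | ∃ t : ℕ, n = t ∧ zBlueAt G F B t = Set.univ}

/-! ### `⌊Z⌋` (minor monotone floor) forcing -/

/-- Validity of a single `⌊Z⌋` force `u → w`: `u` is blue and has not yet forced, `w`
is white, and either `w` is the unique white neighbor of `u`, or all neighbors of `u`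
are blue (a hop). -/
def zfForceValid (G : SimpleGraph V) (blue forced : Set V) (u w : V) : Prop :=
  u ∈ blue ∧ w ∉ blue ∧ u ∉ forced ∧
    ((G.Adj u w ∧ ∀ x, G.Adj u x → x ∉ blue → x = w) ∨ ∀ x, G.Adj u x → x ∈ blue)

/-- Validity of a chronological list of `⌊Z⌋` forces. -/
def zfValidList (G : SimpleGraph V) : Set V → Set V → List (V × V) → Prop
  | _, _, [] => True
  | blue, forced, p :: L =>
      zfForceValid G blue forced p.1 p.2 ∧
        zfValidList G (insert p.2 blue) (insert p.1 forced) L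

/-- `F` is a set of `⌊Z⌋` forces of `B` in `G` (recorded from a maximal chronological
list of `⌊Z⌋` forces starting with `B` blue). -/
def IsZFForceSet (G : SimpleGraph V) (B : Set V) (F : Set (V × V)) : Prop :=
  ∃ L : List (V × V), zfValidList G B ∅ L ∧
    (∀ u w, ¬ zfForceValid G (endBlue B L) (endForced L) u w) ∧ F = {p | p ∈ L}

/-- The set of blue vertices at time `t` when the `⌊Z⌋` forces of `F` are performed at
the earliest possible time steps, starting from `B` blue. -/
def zfBlueAt (G : SimpleGraph V) (F : Set (V × V)) (B : Set V) : ℕ → Set V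
  | 0 => B
  | t + 1 =>
      zfBlueAt G F B t ∪
        {w | ∃ v, (v, w) ∈ F ∧ v ∈ zfBlueAt G F B t ∧ w ∉ zfBlueAt G F B t ∧
          (∀ w', (v, w') ∈ F → w' ∈ zfBlueAt G F B t → w' ∈ B) ∧
          ((G.Adj v w ∧ ∀ x, G.Adj v x → x ∉ zfBlueAt G F B t → x = w) ∨
            ∀ x, G.Adj v x → x ∈ zfBlueAt G F B t)}

/-- The `⌊Z⌋` propagation time `pt_⌊Z⌋(G;F)` of a set of `⌊Z⌋` forces `F` of `B`. -/
noncomputable def ptZFofF (G : SimpleGraph V) (F : Set (V × V)) (B : Set V) : ℕ∞ :=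
  sInf {n : ℕ∞ | ∃ t : ℕ, n = t ∧ zfBlueAt G F B t = Set.univ}

/-- The `⌊Z⌋` propagation time `pt_⌊Z⌋(G;B)`, minimized over sets of `⌊Z⌋` forces of `B`. -/
noncomputable def ptZF (G : SimpleGraph V) (B : Set V) : ℕ∞ :=
  sInf {n : ℕ∞ | ∃ F : Set (V × V), IsZFForceSet G B F ∧ n = ptZFofF G F B}

/-- The `⌊Z⌋` throttling number `th_⌊Z⌋(G;B) = |B| + pt_⌊Z⌋(G;B)`. -/
noncomputable def thZF (G : SimpleGraph V) (B : Set V) : ℕ∞ :=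
  (B.ncard : ℕ∞) + ptZF G B

/-- The `⌊Z⌋` throttling number `th_⌊Z⌋(G)`, minimized over all `B ⊆ V(G)`. -/
noncomputable def thZFgraph (G : SimpleGraph V) : ℕ∞ :=
  sInf {n : ℕ∞ | ∃ B : Set V, n = thZF G B}

/-- `B` is a `⌊Z⌋` forcing set of `G`. -/
def IsZFForcingSet (G : SimpleGraph V) (B : Set V) : Prop :=
  ∃ F : Set (V × V), IsZFForceSet G B F ∧ B ∪ {w | ∃ u, (u, w) ∈ F} = Set.univ

/-- The `⌊Z⌋` forcing number `⌊Z⌋(G)`. -/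
noncomputable def ZFnum (G : SimpleGraph V) : ℕ :=
  sInf {k : ℕ | ∃ B : Set V, IsZFForcingSet G B ∧ B.ncard = k}

/-- The `⌊Z⌋` propagation time `pt_⌊Z⌋(G)`, minimized over minimum `⌊Z⌋` forcing sets. -/
noncomputable def ptZFgraph (G : SimpleGraph V) : ℕ∞ :=
  sInf {n : ℕ∞ | ∃ B : Set V, IsZFForcingSet G B ∧ B.ncard = ZFnum G ∧ n = ptZF G B}

/-! ### Contractions, minors, and products -/

/-- The graph obtained from `H` by contracting (all) the edges in `C`: its vertices are
the connected components of the spanning subgraph of `H` with edge set `C ∩ E(H)`, and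
two distinct components are adjacent iff `H` has an edge between them. -/
def contractEdges (H : SimpleGraph α) (C : Set (Sym2 α)) :
    SimpleGraph (SimpleGraph.fromEdgeSet C ⊓ H).ConnectedComponent where
  Adj c d := c ≠ d ∧ ∃ a b, H.Adj a b ∧
      (SimpleGraph.fromEdgeSet C ⊓ H).connectedComponentMk a = c ∧
      (SimpleGraph.fromEdgeSet C ⊓ H).connectedComponentMk b = d
  symm := by
    constructor
    rintro c d ⟨hcd, a, b, hab, ha, hb⟩
    exact ⟨hcd.symm, b, a, hab.symm, hb, ha⟩
  loopless := ⟨fun c h => h.1 rfl⟩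

/-- `G` is a minor of `H`: `G` is isomorphic to a subgraph of a graph obtained from an
induced subgraph of `H` by contracting a set of edges. -/
def IsMinor (G : SimpleGraph β) (H : SimpleGraph α) : Prop :=
  ∃ (s : Set α) (C : Set (Sym2 s))
    (G'' : SimpleGraph (SimpleGraph.fromEdgeSet C ⊓ H.induce s).ConnectedComponent),
      G'' ≤ contractEdges (H.induce s) C ∧ Nonempty (G ≃g G'')

/-- The Cartesian product `K_a □ P_{b+1}`. -/
def prodKP (a b : ℕ) : SimpleGraph (Fin a × Fin (b + 1)) :=
  (⊤ : SimpleGraph (Fin a)) □ SimpleGraph.pathGraph (b + 1)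

/-- The path edges of `K_a □ P_{b+1}` (edges within the copies of `P_{b+1}`). -/
def pathEdges (a b : ℕ) : Set (Sym2 (Fin a × Fin (b + 1))) :=
  {e | ∃ (i : Fin a) (j j' : Fin (b + 1)),
    (SimpleGraph.pathGraph (b + 1)).Adj j j' ∧ e = s((i, j), (i, j'))}

/-- The complete edges of `K_a □ P_{b+1}` (edges within the copies of `K_a`). -/
def completeEdges (a b : ℕ) : Set (Sym2 (Fin a × Fin (b + 1))) :=
  {e | ∃ (i i' : Fin a) (j : Fin (b + 1)), i ≠ i' ∧ e = s((i, j), (i', j))}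

/-- The star `K_{1,n-1}` on `n` vertices: vertex `0` is adjacent to all others. -/
def starGraph (n : ℕ) : SimpleGraph (Fin n) where
  Adj i j := i ≠ j ∧ ((i : ℕ) = 0 ∨ (j : ℕ) = 0)
  symm := by constructor; rintro i j ⟨h1, h2⟩; exact ⟨h1.symm, h2.symm⟩
  loopless := ⟨fun i h => h.1 rfl⟩

/-- The independence number `α(G)`. -/
noncomputable def indepNum (G : SimpleGraph V) : ℕ :=
  sSup {k : ℕ | ∃ s : Set V, (∀ a ∈ s, ∀ b ∈ s, a ≠ b → ¬ G.Adj a b) ∧ s.ncard = k}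

/-!
Each vertex forces at most once, so at any time at most `|B|` blue vertices can still force, and
after `t` rounds at most `|B| (t + 1)` vertices are blue. Hence `n ≤ |B| (t + 1)`, and AM-GM gives
`|B| + t ≥ 2 √n - 1`.

Conversely, start from an arc of `c + 1` vertices. In every round its two ends force outwards and
its `c - 1` most recently coloured inner vertices, whose neighbours are all blue, hop ahead, so the
arc grows by `c + 1` per round and covers `C_n` after `t` rounds once `n ≤ (c + 1) (t + 1)`.
Taking `c + 1` and `t + 1` to be the two halves of `⌈2 √n - 1⌉ + 1` gives the matching bound.
-/

def CanForce (G : SimpleGraph V) (blue : Set V) (u w : V) : Prop :=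
  (G.Adj u w ∧ ∀ x, G.Adj u x → x ∉ blue → x = w) ∨ ∀ x, G.Adj u x → x ∈ blue

lemma CanForce.mono {G : SimpleGraph V} {s s' : Set V} {u w : V} (h : CanForce G s u w)
    (hss' : s ⊆ s') : CanForce G s' u w := by
  rcases h with ⟨hadj, huniq⟩ | hhop
  · exact Or.inl ⟨hadj, fun x hx hxs' => huniq x hx fun hxs => hxs' (hss' hxs)⟩
  · exact Or.inr fun x hx => hss' (hhop x hx)

section ForcingLists

variable {G : SimpleGraph V}

lemma zfValidList.forall_fst_notMem_and_nodup :
    ∀ {blue forced : Set V} {L : List (V × V)}, zfValidList G blue forced L →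
      (∀ p ∈ L, p.1 ∉ forced) ∧ (L.map Prod.fst).Nodup
  | _, _, [], _ => by simp
  | _, _, p :: L, ⟨hp, hL⟩ => by
    obtain ⟨hfresh, hnodup⟩ := zfValidList.forall_fst_notMem_and_nodup hL
    refine ⟨?_, List.nodup_cons.2 ⟨fun hmem => ?_, hnodup⟩⟩
    · intro q hq
      rcases List.mem_cons.1 hq with rfl | hq
      · exact hp.2.2.1
      · exact fun h => hfresh q hq (Set.mem_insert_of_mem _ h)
    · obtain ⟨q, hq, hqp⟩ := List.mem_map.1 hmem
      exact hfresh q hq (hqp ▸ Set.mem_insert _ _)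

lemma IsZFForceSet.injOn_fst {B : Set V} {F : Set (V × V)} (h : IsZFForceSet G B F) :
    Set.InjOn Prod.fst F := by
  obtain ⟨L, hL, -, rfl⟩ := h
  exact List.inj_on_of_nodup_map (zfValidList.forall_fst_notMem_and_nodup hL).2

lemma endBlue_cons (B : Set V) (p : V × V) (L : List (V × V)) :
    endBlue B (p :: L) = endBlue (insert p.2 B) L := by
  ext x
  simp only [endBlue, List.mem_cons, Set.mem_union, Set.mem_insert_iff, Set.mem_ofPred_eq]
  constructor
  · rintro (h | ⟨u, rfl | h⟩)
    exacts [Or.inl (Or.inr h), Or.inl (Or.inl rfl), Or.inr ⟨u, h⟩]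
  · rintro ((rfl | h) | ⟨u, h⟩)
    exacts [Or.inr ⟨p.1, Or.inl rfl⟩, Or.inl h, Or.inr ⟨u, Or.inr h⟩]

lemma union_endForced_cons (forced : Set V) (p : V × V) (L : List (V × V)) :
    forced ∪ endForced (p :: L) = insert p.1 forced ∪ endForced L := by
  ext x
  simp only [endForced, List.mem_cons, Set.mem_union, Set.mem_insert_iff, Set.mem_ofPred_eq]
  constructor
  · rintro (h | ⟨w, rfl | h⟩)
    exacts [Or.inl (Or.inr h), Or.inl (Or.inl rfl), Or.inr ⟨w, h⟩]
  · rintro ((rfl | h) | ⟨w, h⟩)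
    exacts [Or.inr ⟨p.2, Or.inl rfl⟩, Or.inl h, Or.inr ⟨w, Or.inr h⟩]

lemma zfValidList_append :
    ∀ {blue forced : Set V} {L₁ L₂ : List (V × V)},
      zfValidList G blue forced (L₁ ++ L₂) ↔
        zfValidList G blue forced L₁ ∧
          zfValidList G (endBlue blue L₁) (forced ∪ endForced L₁) L₂
  | blue, forced, [], L₂ => by
    simp [zfValidList, endBlue, endForced]
  | blue, forced, p :: L₁, L₂ => by
    rw [List.cons_append, zfValidList, zfValidList, zfValidList_append, endBlue_cons,
      union_endForced_cons, and_assoc]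

lemma zfValidList_of_forall {S : Set V} :
    ∀ {blue forced : Set V} {L : List (V × V)}, S ⊆ blue → (L.map Prod.fst).Nodup →
      (L.map Prod.snd).Nodup →
      (∀ p ∈ L, p.1 ∈ S ∧ p.2 ∉ blue ∧ p.1 ∉ forced ∧ CanForce G S p.1 p.2) →
      zfValidList G blue forced L
  | _, _, [], _, _, _, _ => trivial
  | blue, forced, p :: L, hS, hfst, hsnd, h => by
    obtain ⟨hp1, hp2, hp3, hp4⟩ := h p List.mem_cons_self
    rw [List.map_cons, List.nodup_cons] at hfst hsnd
    refine ⟨⟨hS hp1, hp2, hp3, hp4.mono hS⟩,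
      zfValidList_of_forall (hS.trans (Set.subset_insert _ _)) hfst.2 hsnd.2 fun q hq => ?_⟩
    obtain ⟨hq1, hq2, hq3, hq4⟩ := h q (List.mem_cons_of_mem _ hq)
    refine ⟨hq1, ?_, ?_, hq4⟩
    · rintro (hqp | hq2')
      exacts [hsnd.1 (hqp ▸ List.mem_map_of_mem hq), hq2 hq2']
    · rintro (hqp | hq3')
      exacts [hfst.1 (hqp ▸ List.mem_map_of_mem hq), hq3 hq3']

end ForcingLists

section LowerBound

variable {G : SimpleGraph V} {B : Set V} {F : Set (V × V)}

lemma zfBlueAt_mono : Monotone (zfBlueAt G F B) :=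
  monotone_nat_of_le_succ fun _ => Set.subset_union_left

lemma exists_forcer_of_mem_zfBlueAt {t : ℕ} {w : V} (hw : w ∈ zfBlueAt G F B t) (hwB : w ∉ B) :
    ∃ v ∈ zfBlueAt G F B t, (v, w) ∈ F := by
  induction t with
  | zero => exact absurd hw hwB
  | succ t ih =>
    rcases hw with hw | ⟨v, hvw, hv, -⟩
    · obtain ⟨v, hv, hvw⟩ := ih hw
      exact ⟨v, zfBlueAt_mono (Nat.le_succ t) hv, hvw⟩
    · exact ⟨v, zfBlueAt_mono (Nat.le_succ t) hv, hvw⟩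

lemma ncard_le_ncard_of_injOn_fst {s : Set β} {s' : Set α} {F : Set (α × β)}
    (hF : Set.InjOn Prod.fst F) (h : ∀ w ∈ s, ∃ v ∈ s', (v, w) ∈ F) (hs' : s'.Finite) :
    s.ncard ≤ s'.ncard := by
  rcases s.eq_empty_or_nonempty with rfl | ⟨w, hw⟩
  · simp
  have : Nonempty α := ⟨(h w hw).choose⟩
  choose! g hg hgF using h
  refine Set.ncard_le_ncard_of_injOn g hg (fun w₁ hw₁ w₂ hw₂ he => ?_) hs'
  exact congrArg Prod.snd (hF (hgF w₁ hw₁) (hgF w₂ hw₂) he)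

/-- Each blue vertex outside `B` has its own forcer, which is blue and spent; so at most `|B|` blue
vertices can still force, and each of them forces at most one new vertex. -/
lemma ncard_zfBlueAt_succ_le [Finite V] (hF : Set.InjOn Prod.fst F) (t : ℕ) :
    (zfBlueAt G F B (t + 1)).ncard ≤ (zfBlueAt G F B t).ncard + B.ncard := by
  set X := zfBlueAt G F B t
  set spent := {v | ∃ w ∈ X \ B, (v, w) ∈ F}
  have hspent : (X \ B).ncard ≤ (X ∩ spent).ncard :=
    ncard_le_ncard_of_injOn_fst hF (fun w ⟨hwX, hwB⟩ => by
      obtain ⟨v, hv, hvw⟩ := exists_forcer_of_mem_zfBlueAt hwX hwB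
      exact ⟨v, ⟨hv, w, ⟨hwX, hwB⟩, hvw⟩, hvw⟩) (Set.toFinite _)
  have hnew : (zfBlueAt G F B (t + 1) \ X).ncard ≤ (X \ spent).ncard :=
    ncard_le_ncard_of_injOn_fst hF (fun w hw => by
      obtain ⟨v, hvw, hv, -, hfirst, -⟩ := hw.1.resolve_left hw.2
      refine ⟨v, ⟨hv, fun ⟨w', ⟨hw'X, hw'B⟩, hvw'⟩ => hw'B (hfirst w' hvw' hw'X)⟩, hvw⟩)
      (Set.toFinite _)
  have h₁ := Set.ncard_inter_add_ncard_sdiff_eq_ncard X spent (Set.toFinite _)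
  have h₂ := Set.ncard_inter_add_ncard_sdiff_eq_ncard X B (Set.toFinite _)
  have h₃ : (X ∩ B).ncard ≤ B.ncard := Set.ncard_le_ncard Set.inter_subset_right (Set.toFinite _)
  have h₄ : (zfBlueAt G F B (t + 1)).ncard ≤ X.ncard + (zfBlueAt G F B (t + 1) \ X).ncard := by
    rw [← Set.ncard_union_eq Set.disjoint_sdiff_right (Set.toFinite _) (Set.toFinite _),
      Set.union_sdiff_cancel (zfBlueAt_mono (Nat.le_succ t))]
  omega

lemma ncard_zfBlueAt_le [Finite V] (hF : Set.InjOn Prod.fst F) (t : ℕ) :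
    (zfBlueAt G F B t).ncard ≤ B.ncard * (t + 1) := by
  induction t with
  | zero => simp [zfBlueAt]
  | succ t ih =>
    have := ncard_zfBlueAt_succ_le (G := G) (B := B) hF t
    rw [Nat.mul_succ]
    omega

lemma le_thZFgraph [Finite V] {k : ℕ}
    (hk : ∀ b t : ℕ, Nat.card V ≤ b * (t + 1) → k ≤ b + t) : (k : ℕ∞) ≤ thZFgraph G := by
  refine le_sInf ?_
  rintro _ ⟨B, rfl⟩
  rw [thZF, ptZF, ENat.add_sInf]
  refine le_iInf₂ ?_
  rintro _ ⟨F, hF, rfl⟩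
  rw [ptZFofF, ENat.add_sInf]
  refine le_iInf₂ ?_
  rintro _ ⟨t, rfl, ht⟩
  have hcard := ncard_zfBlueAt_le (G := G) (B := B) hF.injOn_fst t
  rw [ht, Set.ncard_univ] at hcard
  exact_mod_cast hk _ _ hcard

end LowerBound

/-- Round `j` colours `blue (j + 1) \ blue j`, each `w` there being forced by `forcer j w`.
Requiring the forcers of round `j` to be new at time `j` guarantees that no vertex forces twice. -/
structure ZFSchedule (G : SimpleGraph V) (B : Set V) (t : ℕ) where
  blue : ℕ → Set V
  forcer : ℕ → V → V
  blue_zero : blue 0 = B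
  monotone_blue : Monotone blue
  blue_eq_univ : blue t = Set.univ
  forcer_mem : ∀ j < t, ∀ w ∈ blue (j + 1) \ blue j, forcer j w ∈ blue j
  forcer_not_mem : ∀ j < t, ∀ w ∈ blue (j + 1) \ blue j, ∀ i < j, forcer j w ∉ blue i
  injOn_forcer : ∀ j < t, Set.InjOn (forcer j) (blue (j + 1) \ blue j)
  canForce : ∀ j < t, ∀ w ∈ blue (j + 1) \ blue j, CanForce G (blue j) (forcer j w) w

namespace ZFSchedule

variable {G : SimpleGraph V} {B : Set V} {t : ℕ} (s : ZFSchedule G B t)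

lemma eq_of_forcer_eq {i j : ℕ} (hi : i < t) (hj : j < t) {w w' : V}
    (hw : w ∈ s.blue (i + 1) \ s.blue i) (hw' : w' ∈ s.blue (j + 1) \ s.blue j)
    (h : s.forcer i w = s.forcer j w') : w = w' := by
  rcases lt_trichotomy i j with hij | rfl | hij
  · exact absurd (h ▸ s.forcer_mem i hi w hw) (s.forcer_not_mem j hj w' hw' i hij)
  · exact s.injOn_forcer i hi hw hw' h
  · exact absurd (h ▸ s.forcer_mem j hj w' hw') (s.forcer_not_mem i hi w hw j hij)

lemma subset_blue (j : ℕ) : B ⊆ s.blue j :=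
  fun _ hw => s.monotone_blue (Nat.zero_le j) (by rwa [s.blue_zero])

lemma blue_subset_union (j : ℕ) : s.blue j ⊆ B ∪ {w | ∃ i < j, w ∈ s.blue (i + 1) \ s.blue i} := by
  induction j with
  | zero => rw [s.blue_zero]; exact Set.subset_union_left
  | succ j ih =>
    intro w hw
    by_cases hwj : w ∈ s.blue j
    · obtain hwB | ⟨i, hij, hwi⟩ := ih hwj
      exacts [Or.inl hwB, Or.inr ⟨i, hij.trans (Nat.lt_succ_self j), hwi⟩]
    · exact Or.inr ⟨j, Nat.lt_succ_self j, hw, hwj⟩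

variable [Finite V]

noncomputable def forcesAt (j : ℕ) : List (V × V) :=
  (Set.toFinite (s.blue (j + 1) \ s.blue j)).toFinset.toList.map fun w => (s.forcer j w, w)

noncomputable def forcesUpTo (j : ℕ) : List (V × V) :=
  (List.range j).flatMap s.forcesAt

lemma mem_forcesAt {j : ℕ} {p : V × V} :
    p ∈ s.forcesAt j ↔ ∃ w ∈ s.blue (j + 1) \ s.blue j, (s.forcer j w, w) = p := by
  simp [forcesAt]

lemma mem_forcesUpTo {j : ℕ} {p : V × V} :
    p ∈ s.forcesUpTo j ↔ ∃ i < j, ∃ w ∈ s.blue (i + 1) \ s.blue i, (s.forcer i w, w) = p := by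
  simp only [forcesUpTo, List.mem_flatMap, List.mem_range, mem_forcesAt]

lemma forcesUpTo_succ (j : ℕ) : s.forcesUpTo (j + 1) = s.forcesUpTo j ++ s.forcesAt j := by
  simp [forcesUpTo, List.range_succ]

lemma zfValidList_forcesUpTo {j : ℕ} (hj : j ≤ t) : zfValidList G B ∅ (s.forcesUpTo j) := by
  induction j with
  | zero => trivial
  | succ j ih =>
    have hjt : j < t := hj
    rw [forcesUpTo_succ, zfValidList_append]
    refine ⟨ih hjt.le, zfValidList_of_forall (S := s.blue j) ?_ ?_ ?_ ?_⟩
    · intro w hw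
      obtain hwB | ⟨i, hij, hwi⟩ := s.blue_subset_union j hw
      · exact Or.inl hwB
      · exact Or.inr ⟨s.forcer i w, s.mem_forcesUpTo.2 ⟨i, hij, w, hwi, rfl⟩⟩
    · simp only [forcesAt, List.map_map]
      exact List.Nodup.map_on (fun w hw w' hw' => s.injOn_forcer j hjt (by simpa using hw)
        (by simpa using hw')) (Finset.nodup_toList _)
    · simp only [forcesAt, List.map_map, Function.comp_def, List.map_id']
      exact Finset.nodup_toList _
    · rintro _ hp
      obtain ⟨w, hw, rfl⟩ := s.mem_forcesAt.1 hp
      refine ⟨s.forcer_mem j hjt w hw, ?_, ?_, s.canForce j hjt w hw⟩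
      · rintro (hwB | ⟨u, hu⟩)
        · exact hw.2 (s.subset_blue j hwB)
        · obtain ⟨i, hij, w', hw', hp'⟩ := s.mem_forcesUpTo.1 hu
          cases congrArg Prod.snd hp'
          exact hw.2 (s.monotone_blue hij hw'.1)
      · rintro (h | ⟨x, hx⟩)
        · exact h
        · obtain ⟨i, hij, w', hw', hp'⟩ := s.mem_forcesUpTo.1 hx
          have hforcer : s.forcer i w' = s.forcer j w := congrArg Prod.fst hp'
          exact s.forcer_not_mem j hjt w hw i hij (hforcer ▸ s.forcer_mem i (hij.trans hjt) w' hw')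

lemma isZFForceSet : IsZFForceSet G B {p | p ∈ s.forcesUpTo t} := by
  refine ⟨_, s.zfValidList_forcesUpTo le_rfl, fun u w hvalid => hvalid.2.1 ?_, rfl⟩
  obtain hwB | ⟨i, hit, hw⟩ := s.blue_subset_union t (s.blue_eq_univ ▸ Set.mem_univ w)
  · exact Or.inl hwB
  · exact Or.inr ⟨s.forcer i w, s.mem_forcesUpTo.2 ⟨i, hit, w, hw, rfl⟩⟩

lemma blue_subset_zfBlueAt {j : ℕ} (hj : j ≤ t) :
    s.blue j ⊆ zfBlueAt G {p | p ∈ s.forcesUpTo t} B j := by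
  induction j with
  | zero => rw [s.blue_zero]; rfl
  | succ j ih =>
    have hjt : j < t := hj
    have ih := ih hjt.le
    intro w hw
    by_cases hwj : w ∈ s.blue j
    · exact zfBlueAt_mono (Nat.le_succ j) (ih hwj)
    by_cases hwX : w ∈ zfBlueAt G {p | p ∈ s.forcesUpTo t} B j
    · exact zfBlueAt_mono (Nat.le_succ j) hwX
    refine Or.inr ⟨s.forcer j w, s.mem_forcesUpTo.2 ⟨j, hjt, w, ⟨hw, hwj⟩, rfl⟩,
      ih (s.forcer_mem j hjt w ⟨hw, hwj⟩), hwX, fun w' hw' hw'X => ?_,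
      (s.canForce j hjt w ⟨hw, hwj⟩).mono ih⟩
    obtain ⟨i, hit, w'', hw'', hp⟩ := s.mem_forcesUpTo.1 hw'
    cases congrArg Prod.snd hp
    cases s.eq_of_forcer_eq hit hjt hw'' ⟨hw, hwj⟩ (congrArg Prod.fst hp)
    exact absurd hw'X hwX

lemma ptZF_le (s : ZFSchedule G B t) : ptZF G B ≤ t := by
  have huniv : zfBlueAt G {p | p ∈ s.forcesUpTo t} B t = Set.univ :=
    Set.eq_univ_of_univ_subset (s.blue_eq_univ ▸ s.blue_subset_zfBlueAt le_rfl)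
  calc ptZF G B ≤ ptZFofF G {p | p ∈ s.forcesUpTo t} B := sInf_le ⟨_, s.isZFForceSet, rfl⟩
    _ ≤ t := sInf_le ⟨t, rfl, huniv⟩

lemma thZFgraph_le (s : ZFSchedule G B t) : thZFgraph G ≤ B.ncard + t :=
  calc thZFgraph G ≤ thZF G B := sInf_le ⟨B, rfl⟩
    _ ≤ B.ncard + t := add_le_add_right s.ptZF_le _

end ZFSchedule

lemma cycleGraph_adj_iff_val {n : ℕ} (hn : 2 ≤ n) {u v : Fin n} :
    (cycleGraph n).Adj u v ↔ u.val + 1 = v.val ∨ v.val + 1 = u.val ∨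
      (u.val = 0 ∧ v.val + 1 = n) ∨ (v.val = 0 ∧ u.val + 1 = n) := by
  have hsub : ∀ a b : Fin n, (a - b).val = 1 ↔ a.val = b.val + 1 ∨ a.val + n = b.val + 1 := by
    intro a b
    have := a.isLt
    rcases le_or_gt b a with h | h
    · rw [Fin.coe_sub_iff_le.2 h]; rw [Fin.le_def] at h; omega
    · rw [Fin.coe_sub_iff_lt.2 h]; rw [Fin.lt_def] at h; omega
  rw [cycleGraph_adj', hsub, hsub]
  have := u.isLt
  have := v.isLt
  omega

section Cycle

variable {n c t : ℕ}

/-- The arc from `-j` to `c (j + 1)`, blue after round `j`. -/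
def cycleBlue (n c j : ℕ) : Set (Fin n) := {v | v.val ≤ c * (j + 1) ∨ n ≤ v.val + j}

/-- In round `j` the left end `-j` forces `-(j + 1)`, the right end `c (j + 1)` forces the next
vertex, and the other `c - 1` vertices `c j + 1, …, c j + c - 1` (blue since the last round, with
both neighbours blue) hop `c + 1` steps to the right. -/
def cycleForcer (n c j : ℕ) (w : Fin n) : Fin n :=
  if h : w.val + j + 1 = n then
    ⟨if j = 0 then 0 else w.val + 1, by have := w.isLt; split <;> omega⟩
  else if h' : w.val = c * (j + 1) + 1 then ⟨c * (j + 1), by have := w.isLt; omega⟩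
  else ⟨w.val - (c + 1), by have := w.isLt; omega⟩

lemma cycleForcer_val_cases (w : Fin n) (j : ℕ) :
    (w.val + j + 1 = n ∧ j = 0 ∧ (cycleForcer n c j w).val = 0) ∨
    (w.val + j + 1 = n ∧ j ≠ 0 ∧ (cycleForcer n c j w).val = w.val + 1) ∨
    (w.val + j + 1 ≠ n ∧ w.val = c * (j + 1) + 1 ∧ (cycleForcer n c j w).val = c * (j + 1)) ∨
    (w.val + j + 1 ≠ n ∧ w.val ≠ c * (j + 1) + 1 ∧
      (cycleForcer n c j w).val = w.val - (c + 1)) := by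
  unfold cycleForcer
  split_ifs <;> dsimp only <;> omega

lemma cycle_round_bounds (hlt : (c + 1) * t < n) {j : ℕ} (hj : j < t) :
    c * (j + 1) = c * j + c ∧ c * (j + 1 + 1) = c * j + c + c ∧ c * j + c + j + 1 < n := by
  have := Nat.mul_le_mul_left (c + 1) hj
  refine ⟨by ring, by ring, ?_⟩
  nlinarith

def cycleSchedule (hc : 1 ≤ c) (hlt : (c + 1) * t < n) (hle : n ≤ (c + 1) * (t + 1)) :
    ZFSchedule (cycleGraph n) (cycleBlue n c 0) t where
  blue := cycleBlue n c
  forcer := cycleForcer n c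
  blue_zero := rfl
  monotone_blue := monotone_nat_of_le_succ fun j v hv => by
    have := Nat.mul_le_mul_left c (Nat.le_add_right (j + 1) 1)
    simp only [cycleBlue, Set.mem_ofPred_eq] at hv ⊢
    omega
  blue_eq_univ := Set.eq_univ_of_forall fun v => by
    have := v.isLt
    have : (c + 1) * (t + 1) = c * (t + 1) + t + 1 := by ring
    simp only [cycleBlue, Set.mem_ofPred_eq]
    omega
  forcer_mem j hj w hw := by
    have hbounds := cycle_round_bounds hlt hj
    have hval := cycleForcer_val_cases (c := c) w j
    simp only [cycleBlue, Set.mem_sdiff, Set.mem_ofPred_eq] at hw ⊢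
    omega
  forcer_not_mem j hj w hw i hij := by
    have hbounds := cycle_round_bounds hlt hj
    have hval := cycleForcer_val_cases (c := c) w j
    have hi := Nat.mul_le_mul_left c (show i + 1 ≤ j from hij)
    simp only [cycleBlue, Set.mem_sdiff, Set.mem_ofPred_eq] at hw ⊢
    omega
  injOn_forcer j hj w hw w' hw' h := by
    have hbounds := cycle_round_bounds hlt hj
    have hval := cycleForcer_val_cases (c := c) w j
    have hval' := cycleForcer_val_cases (c := c) w' j
    simp only [cycleBlue, Set.mem_sdiff, Set.mem_ofPred_eq] at hw hw'
    rw [Fin.ext_iff] at h ⊢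
    omega
  canForce j hj w hw := by
    have hbounds := cycle_round_bounds hlt hj
    have hn : 2 ≤ n := by omega
    have := w.isLt
    simp only [cycleBlue, Set.mem_sdiff, Set.mem_ofPred_eq] at hw
    unfold CanForce
    simp only [cycleGraph_adj_iff_val hn, cycleBlue, Set.mem_ofPred_eq, Fin.ext_iff]
    rcases cycleForcer_val_cases (c := c) w j with h | h | h | h
    · exact Or.inl ⟨by omega, fun x hx hxS => by omega⟩
    · exact Or.inl ⟨by omega, fun x hx hxS => by omega⟩
    · exact Or.inl ⟨by omega, fun x hx hxS => by omega⟩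
    · exact Or.inr fun x hx => by omega

lemma ncard_cycleBlue_zero_le : (cycleBlue n c 0).ncard ≤ c + 1 :=
  calc (cycleBlue n c 0).ncard ≤ (Finset.range (c + 1) : Set ℕ).ncard :=
        Set.ncard_le_ncard_of_injOn Fin.val
          (fun v hv => by
            have := v.isLt
            simp only [cycleBlue, Set.mem_ofPred_eq] at hv
            simp only [Finset.coe_range, Set.mem_Iio]
            omega)
          Fin.val_injective.injOn
    _ = c + 1 := by simp

lemma thZFgraph_cycleGraph_le (hc : 1 ≤ c) (hlt : (c + 1) * t < n)
    (hle : n ≤ (c + 1) * (t + 1)) : thZFgraph (cycleGraph n) ≤ (c + 1 + t : ℕ) :=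
  calc thZFgraph (cycleGraph n) ≤ (cycleBlue n c 0).ncard + t :=
        (cycleSchedule hc hlt hle).thZFgraph_le
    _ ≤ (c + 1 : ℕ) + t := by gcongr; exact_mod_cast ncard_cycleBlue_zero_le
    _ = (c + 1 + t : ℕ) := by push_cast; rfl

end Cycle

lemma toNat_ceil_two_mul_sqrt_sub_one_le_iff (n k : ℕ) :
    (⌈2 * Real.sqrt n - 1⌉).toNat ≤ k ↔ 4 * n ≤ (k + 1) ^ 2 := by
  have htwo : 2 * Real.sqrt n = Real.sqrt (4 * n) := by
    rw [Real.sqrt_mul (by norm_num), show (4 : ℝ) = 2 ^ 2 by norm_num,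
      Real.sqrt_sq (by norm_num)]
  rw [Int.toNat_le, Int.ceil_le, htwo, sub_le_iff_le_add,
    Real.sqrt_le_left (by positivity)]
  push_cast
  exact_mod_cast Iff.rfl

lemma four_mul_le_sq_of_le_mul_succ {n b t : ℕ} (h : n ≤ b * (t + 1)) :
    4 * n ≤ (b + t + 1) ^ 2 := by
  zify at h ⊢
  nlinarith [sq_nonneg ((b : ℤ) - t - 1)]

/-- `c + 1` and `t + 1` are the two halves of `m + 1`, rounded up and down. -/
lemma exists_mul_lt_le_mul_succ {n m : ℕ} (hn : 3 ≤ n) (hlow : m ^ 2 < 4 * n)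
    (hup : 4 * n ≤ (m + 1) ^ 2) :
    ∃ c t : ℕ, 1 ≤ c ∧ c + 1 + t = m ∧ (c + 1) * t < n ∧ n ≤ (c + 1) * (t + 1) := by
  obtain ⟨r, rfl | rfl⟩ := Nat.even_or_odd' m <;> obtain _ | r := r
  · norm_num at hup; omega
  · exact ⟨r + 1, r, by omega, by omega, by nlinarith, by nlinarith⟩
  · norm_num at hup; omega
  · exact ⟨r + 1, r + 1, by omega, by omega, by nlinarith, by nlinarith⟩

/-- `th_⌊Z⌋(C_n) = ⌈2√n − 1⌉` for all `n ≥ 3`. -/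
theorem stmt7 (n : ℕ) (hn : 3 ≤ n) :
    thZFgraph (SimpleGraph.cycleGraph n) = ((⌈2 * Real.sqrt n - 1⌉).toNat : ℕ∞) := by
  set K := (⌈2 * Real.sqrt n - 1⌉).toNat
  have hK : ∀ k, K ≤ k ↔ 4 * n ≤ (k + 1) ^ 2 := toNat_ceil_two_mul_sqrt_sub_one_le_iff n
  refine le_antisymm ?_ (le_thZFgraph fun b t h => (hK _).2 ?_)
  · have hpos : 1 ≤ K := Nat.one_le_iff_ne_zero.2 fun h0 => by
      have := (hK 0).1 h0.le
      omega
    have hlow : K ^ 2 < 4 * n := by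
      have := (hK (K - 1)).not.1 (by omega)
      rwa [Nat.sub_add_cancel hpos, not_le] at this
    obtain ⟨c, t, hc, hsum, hlt, hle⟩ := exists_mul_lt_le_mul_succ hn hlow ((hK K).1 le_rfl)
    exact hsum ▸ thZFgraph_cycleGraph_le hc hlt hle
  · rw [Nat.card_eq_fintype_card, Fintype.card_fin] at h
    exact four_mul_le_sq_of_le_mul_succ h

end ZFT
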